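/- Quantile band functions strictly dominate tail-outlying functions: Assume that for every t ∈ I the marginal CDF F_t is continuous on ℝ. Let 0 < α' < α < 1/2, let U ⊆ I be a nonempty open subinterval, and let f : I → ℝ be Borel measurable with f(t) ≤ q_{α'}(t) for all t ∈ U. Then every x ∈ C(I,ℝ) satisfying q_α(t) < x(t) < q_{1−α}(t) for all t ∈ I satisfies f ≺ x. Consequently, ED(f,P) ≤ P*{x ∈ C(I,ℝ) : x(t) ≤ q_α(t) or x(t) ≥ q_{1−α}(t) for some t ∈ I}. -/

import Mathlib

open MeasureTheory Set Filter
open scoped NNReal ENNReal symmDiff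

noncomputable section

/-- The space `C(I, ℝ)` of continuous real-valued functions on `I = [0,1]`,
equipped with the sup metric. -/
abbrev FSp := C(unitInterval, ℝ)

/-- Borel σ-algebra on `C(I, ℝ)`. -/
instance : MeasurableSpace FSp := borel FSp
instance : BorelSpace FSp := ⟨rfl⟩

/-- Pointwise depth `D_g(t) = 1 - |P{x : x(t) > g(t)} - P{x : x(t) < g(t)}|`. -/
def pdepth (P : Measure FSp) (g : unitInterval → ℝ) (t : unitInterval) : ℝ :=
  1 - |(P {x : FSp | g t < x t}).toReal - (P {x : FSp | x t < g t}).toReal|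

/-- Depth CDF (d-CDF) `Φ_g(r) = Leb{t ∈ I : D_g(t) ≤ r}`. -/
def dcdf (P : Measure FSp) (g : unitInterval → ℝ) (r : ℝ) : ℝ :=
  (volume {t : unitInterval | pdepth P g t ≤ r}).toReal

/-- The set `R(g,h) = {r ∈ [0,1] : Φ_g(r) ≠ Φ_h(r)}`. -/
def Rset (P : Measure FSp) (g h : unitInterval → ℝ) : Set ℝ :=
  {r ∈ Icc (0:ℝ) 1 | dcdf P g r ≠ dcdf P h r}

/-- `g ≺ h`: `g` is more extreme than `h`, i.e. `R(g,h)` is nonempty and, with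
`r* = inf R(g,h)`, there is `δ > 0` with `Φ_g(r) > Φ_h(r)` for all
`r ∈ (r*, r*+δ) ∩ [0,1]`.  `g ⪰ h` is `¬ prec P g h`. -/
def prec (P : Measure FSp) (g h : unitInterval → ℝ) : Prop :=
  (Rset P g h).Nonempty ∧
  ∃ δ > 0, ∀ r ∈ Ioo (sInf (Rset P g h)) (sInf (Rset P g h) + δ) ∩ Icc (0:ℝ) 1,
    dcdf P h r < dcdf P g r

/-- Extremal depth `ED(g,P) = P*{x ∈ C(I,ℝ) : g ⪰ x}` (a measure applied to an
arbitrary set is the induced outer measure). -/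
def ed (P : Measure FSp) (g : unitInterval → ℝ) : ℝ :=
  (P {x : FSp | ¬ prec P g ⇑x}).toReal

/-- Minimal depth level `d_f = inf{r ∈ [0,1] : Φ_f(r) > 0}`. -/
def dmin (P : Measure FSp) (f : unitInterval → ℝ) : ℝ :=
  sInf {r ∈ Icc (0:ℝ) 1 | 0 < dcdf P f r}

/-- Marginal CDF `F_t(y) = P{x : x(t) ≤ y}`. -/
def margF (P : Measure FSp) (t : unitInterval) (y : ℝ) : ℝ :=
  (P {x : FSp | x t ≤ y}).toReal

/-- Pointwise quantile function `q_a(t) = inf{y : F_t(y) ≥ a}`. -/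
def quant (P : Measure FSp) (a : ℝ) (t : unitInterval) : ℝ :=
  sInf {y : ℝ | a ≤ margF P t y}

/-- Lower envelope `f_L(t) = inf{f(t) : f ∈ C(I,ℝ), ED(f,P) > α}`. -/
def envL (P : Measure FSp) (α : ℝ) (t : unitInterval) : ℝ :=
  sInf ((fun f : FSp => f t) '' {f : FSp | α < ed P ⇑f})

/-- Upper envelope `f_U(t) = sup{f(t) : f ∈ C(I,ℝ), ED(f,P) > α}`. -/
def envU (P : Measure FSp) (α : ℝ) (t : unitInterval) : ℝ :=
  sSup ((fun f : FSp => f t) '' {f : FSp | α < ed P ⇑f})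

/-- The `(1-α)` extremal-depth central region `C_{1-α}`. -/
def centralRegion (P : Measure FSp) (α : ℝ) : Set FSp :=
  {x : FSp | ∀ t, envL P α t ≤ x t ∧ x t ≤ envU P α t}

/-- Boundary `∂C_{1-α}` of the central region. -/
def centralBoundary (P : Measure FSp) (α : ℝ) : Set FSp :=
  {x ∈ centralRegion P α | ∃ t, x t = envL P α t ∨ x t = envU P α t}

/-! When every marginal CDF `F_t` is continuous, the pointwise depth is
`D_g(t) = 2 min (F_t (g t), 1 - F_t (g t))` and `F_t (q_a(t)) = a` for `0 < a < 1`.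
So `D_f ≤ 2α'` on the interval `(a, b)`, whence `Φ_f(2α') > 0`, while a function `x` in
the quantile band has `D_x ≥ 2α` everywhere, so `Φ_x` vanishes on `[0, 2α)`. Hence
`r* ≤ 2α' < 2α` and `Φ_f > 0 = Φ_x` on `(r*, 2α)`, i.e. `f ≺ x`. The bound on `ED(f)`
follows because any `x` with `f ⪰ x` must leave the band. -/

open ProbabilityTheory Topology

section Quantile

variable {F : ℝ → ℝ} {a : ℝ}

theorem apply_sInf_setOf_le_eq (hF : Continuous F) (hbot : Tendsto F atBot (𝓝 0))
    (htop : Tendsto F atTop (𝓝 1)) (ha₀ : 0 < a) (ha₁ : a < 1) :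
    F (sInf {y | a ≤ F y}) = a := by
  set q := sInf {y | a ≤ F y}
  obtain ⟨y₀, hy₀⟩ := eventually_atBot.1 (hbot.eventually (gt_mem_nhds ha₀))
  have hbdd : BddBelow {y | a ≤ F y} :=
    ⟨y₀, fun y hy => le_of_not_gt fun hlt => (hy₀ y hlt.le).not_ge hy⟩
  have hne : {y | a ≤ F y}.Nonempty :=
    (htop.eventually (lt_mem_nhds ha₁)).exists.imp fun _ => le_of_lt
  refine le_antisymm ?_ ((isClosed_le continuous_const hF).csInf_mem hne hbdd)
  refine le_of_tendsto (hF.continuousWithinAt (s := Iio q) (x := q)).tendsto ?_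
  filter_upwards [self_mem_nhdsWithin] with y hy
  exact (not_le.1 (notMem_of_lt_csInf (s := {y | a ≤ F y}) hy hbdd)).le

end Quantile

section CDF

variable {μ : Measure ℝ} [IsProbabilityMeasure μ] {c : ℝ}

theorem measureReal_Iio_eq_cdf (hc : ContinuousAt (cdf μ) c) :
    μ.real (Iio c) = cdf μ c := by
  have h := (cdf μ).measure_Iio (tendsto_cdf_atBot μ) c
  rw [measure_cdf] at h
  rw [measureReal_def, h, hc.continuousWithinAt.leftLim_eq, sub_zero,
    ENNReal.toReal_ofReal (cdf_nonneg μ c)]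

theorem measureReal_Ioi_eq_one_sub_cdf : μ.real (Ioi c) = 1 - cdf μ c := by
  rw [← compl_Iic, probReal_compl_eq_one_sub measurableSet_Iic, cdf_eq_real]

end CDF

section Depth

variable {P : Measure FSp} {t : unitInterval} {g : unitInterval → ℝ}

theorem measureReal_map_eval (t : unitInterval) {s : Set ℝ} (hs : MeasurableSet s) :
    (P.map fun x : FSp => x t).real s = (P {x | x t ∈ s}).toReal := by
  rw [measureReal_def, Measure.map_apply (continuous_eval_const t).measurable hs]
  rfl

variable [IsProbabilityMeasure P]

instance isProbabilityMeasure_map_eval (t : unitInterval) :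
    IsProbabilityMeasure (P.map fun x : FSp => x t) :=
  Measure.isProbabilityMeasure_map (continuous_eval_const t).aemeasurable

theorem margF_eq_cdf_map (t : unitInterval) : margF P t = cdf (P.map fun x : FSp => x t) := by
  ext y
  rw [cdf_eq_real, measureReal_map_eval t measurableSet_Iic]
  rfl

theorem margF_quant (hF : Continuous (margF P t)) {a : ℝ} (ha₀ : 0 < a) (ha₁ : a < 1) :
    margF P t (quant P a t) = a := by
  rw [quant, margF_eq_cdf_map] at *
  exact apply_sInf_setOf_le_eq hF (tendsto_cdf_atBot _) (tendsto_cdf_atTop _) ha₀ ha₁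

theorem pdepth_eq_two_mul_min (hF : ContinuousAt (margF P t) (g t)) :
    pdepth P g t = 2 * min (margF P t (g t)) (1 - margF P t (g t)) := by
  rw [margF_eq_cdf_map] at *
  have hlt := measureReal_map_eval (P := P) t (measurableSet_Iio (a := g t))
  have hgt := measureReal_map_eval (P := P) t (measurableSet_Ioi (a := g t))
  rw [measureReal_Iio_eq_cdf hF] at hlt
  rw [measureReal_Ioi_eq_one_sub_cdf] at hgt
  simp only [mem_Iio, mem_Ioi] at hlt hgt
  rw [pdepth, ← hlt, ← hgt]
  set u := cdf (P.map fun x : FSp => x t) (g t)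
  rcases le_total u (1 - u) with h | h
  · rw [min_eq_left h, abs_of_nonneg (by linarith)]; ring
  · rw [min_eq_right h, abs_of_nonpos (by linarith)]; ring

theorem monotone_margF (t : unitInterval) : Monotone (margF P t) := by
  rw [margF_eq_cdf_map]
  exact monotone_cdf _

theorem pdepth_le_of_le_quant (hF : Continuous (margF P t)) {α : ℝ} (hα₀ : 0 < α)
    (hα₁ : α < 1) (hg : g t ≤ quant P α t) : pdepth P g t ≤ 2 * α := by
  have hFg : margF P t (g t) ≤ α :=
    (monotone_margF t hg).trans (margF_quant hF hα₀ hα₁).le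
  rw [pdepth_eq_two_mul_min hF.continuousAt]
  linarith [min_le_left (margF P t (g t)) (1 - margF P t (g t))]

theorem two_mul_le_pdepth_of_mem_quant_band (hF : Continuous (margF P t)) {α : ℝ}
    (hα₀ : 0 < α) (hα₁ : α < 1) (hlo : quant P α t ≤ g t) (hhi : g t ≤ quant P (1 - α) t) :
    2 * α ≤ pdepth P g t := by
  have hFlo : α ≤ margF P t (g t) :=
    (margF_quant hF hα₀ hα₁).ge.trans (monotone_margF t hlo)
  have hFhi : margF P t (g t) ≤ 1 - α :=
    (monotone_margF t hhi).trans (margF_quant hF (by linarith) (by linarith)).le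
  rw [pdepth_eq_two_mul_min hF.continuousAt]
  linarith [le_min hFlo (by linarith : α ≤ 1 - margF P t (g t))]

end Depth

section DepthCDF

variable {P : Measure FSp} {g h : unitInterval → ℝ} {r : ℝ}

theorem monotone_dcdf : Monotone (dcdf P g) := fun _ _ hrs =>
  ENNReal.toReal_mono (measure_ne_top _ _) (measure_mono fun _ ht => le_trans ht hrs)

theorem dcdf_eq_zero_of_forall_lt_pdepth (hg : ∀ t, r < pdepth P g t) : dcdf P g r = 0 := by
  have hempty : {t | pdepth P g t ≤ r} = ∅ := eq_empty_of_forall_notMem fun t => (hg t).not_ge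
  rw [dcdf, hempty, measure_empty, ENNReal.toReal_zero]

theorem dcdf_pos_of_forall_mem_Ioo {a b : unitInterval} (hab : a < b)
    (hg : ∀ t ∈ Ioo a b, pdepth P g t ≤ r) : 0 < dcdf P g r := by
  refine ENNReal.toReal_pos (ne_of_gt ?_) (measure_ne_top _ _)
  calc (0 : ℝ≥0∞) < volume (Ioo a b) := by
        rw [unitInterval.volume_Ioo]
        exact ENNReal.ofReal_pos.2 (sub_pos.2 hab)
    _ ≤ volume {t | pdepth P g t ≤ r} := measure_mono hg

theorem prec_of_dcdf_pos_of_dcdf_eq_zero {r₀ s : ℝ} (hr₀ : r₀ ∈ Icc (0 : ℝ) 1) (hr₀s : r₀ < s)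
    (hg : 0 < dcdf P g r₀) (hh : ∀ r < s, dcdf P h r = 0) : prec P g h := by
  have hr₀R : r₀ ∈ Rset P g h := ⟨hr₀, by rw [hh r₀ hr₀s]; exact hg.ne'⟩
  have hne : (Rset P g h).Nonempty := ⟨r₀, hr₀R⟩
  have hinf : sInf (Rset P g h) ≤ r₀ := csInf_le ⟨0, fun r hr => hr.1.1⟩ hr₀R
  refine ⟨hne, s - sInf (Rset P g h), by linarith, ?_⟩
  rintro r ⟨⟨hr_gt, hr_lt⟩, -⟩
  have hrs : r < s := by linarith
  obtain ⟨r', hr'R, hr'r⟩ := exists_lt_of_csInf_lt hne hr_gt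
  have hgr' : 0 < dcdf P g r' := lt_of_le_of_ne ENNReal.toReal_nonneg fun h0 =>
    hr'R.2 (h0.symm.trans (hh r' (hr'r.trans hrs)).symm)
  rw [hh r hrs]
  exact hgr'.trans_le (monotone_dcdf hr'r.le)

end DepthCDF

theorem quantile_band_dominates_general (P : Measure FSp) [IsProbabilityMeasure P]
    (hFcont : ∀ t : unitInterval, Continuous (margF P t))
    (α' α : ℝ) (hα' : 0 < α') (hαα : α' < α) (hα : α < 1/2)
    (a b : unitInterval) (hab : a < b)
    (f : unitInterval → ℝ)
    (hf : ∀ t ∈ Ioo a b, f t ≤ quant P α' t) :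
    (∀ x : FSp, (∀ t, quant P α t < x t ∧ x t < quant P (1 - α) t) →
      prec P f ⇑x) ∧
    ed P f ≤ (P {x : FSp | ∃ t, x t ≤ quant P α t ∨ quant P (1 - α) t ≤ x t}).toReal := by
  have hf_pos : 0 < dcdf P f (2 * α') := dcdf_pos_of_forall_mem_Ioo hab fun t ht =>
    pdepth_le_of_le_quant (hFcont t) hα' (by linarith) (hf t ht)
  have hband : ∀ x : FSp, (∀ t, quant P α t < x t ∧ x t < quant P (1 - α) t) →
      prec P f ⇑x := fun x hx =>
    prec_of_dcdf_pos_of_dcdf_eq_zero ⟨by linarith, by linarith⟩ (by linarith : 2 * α' < 2 * α)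
      hf_pos fun r hr => dcdf_eq_zero_of_forall_lt_pdepth fun t => hr.trans_le <|
        two_mul_le_pdepth_of_mem_quant_band (hFcont t) (by linarith) (by linarith)
          (hx t).1.le (hx t).2.le
  refine ⟨hband, ENNReal.toReal_mono (measure_ne_top _ _) (measure_mono fun x hx => ?_)⟩
  by_contra hout
  exact hx <| hband x fun t => (not_or.1 (not_exists.1 hout t)).imp not_le.1 not_le.1

/-- **Quantile band functions strictly dominate tail-outlying functions.** -/
theorem quantile_band_dominates (P : Measure FSp) [IsProbabilityMeasure P]
    (hFcont : ∀ t : unitInterval, Continuous (margF P t))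
    (α' α : ℝ) (hα' : 0 < α') (hαα : α' < α) (hα : α < 1/2)
    (a b : unitInterval) (hab : a < b)
    (f : unitInterval → ℝ) (hfmeas : Measurable f)
    (hf : ∀ t ∈ Ioo a b, f t ≤ quant P α' t) :
    (∀ x : FSp, (∀ t, quant P α t < x t ∧ x t < quant P (1 - α) t) →
      prec P f ⇑x) ∧
    ed P f ≤ (P {x : FSp | ∃ t, x t ≤ quant P α t ∨ quant P (1 - α) t ≤ x t}).toReal :=
  quantile_band_dominates_general P hFcont α' α hα' hαα hα a b hab f hf
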